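/- arXiv:1403.5647 — 2 statements merged into one kernel-verified Lean document; each statement's English description precedes it below -/
import Mathlib

section
/- Let M = U Σ Vᵀ be the SVD of M ∈ ℝ^(n×m), partitioned so that Σ₂ contains singular values σ_{r+1} ≥ … . Let Ω ∈ ℝ^(m×d} be a test matrix, Ω₁ = V₁ᵀΩ, Ω₂ = V₂ᵀΩ. If λ_min(Ω₁Ω₁ᵀ) ≥ d/(2m) and ‖Ω₂‖₂ ≤ 1, then ‖M − P_Y M‖₂² ≤ σ_{r+1}²(1 + 2m/d), where Y = MΩ and P_Y projects onto the column span of Y. -/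
/-!
Fix `x` and put `z = Mᵀ (1 - P) x`. Since `P` fixes the range of `MΩ`, `Ωᵀ z = 0`, which splits
along the columns of `V` as `Ω₁ᵀ (V₁ᵀ z) = -Ω₂ᵀ (V₂ᵀ z)`. The Rayleigh bound on `Ω₁ Ω₁ᵀ` and
`‖Ω₂‖ ≤ 1` give `‖V₁ᵀ z‖² ≤ (2m/d) ‖V₂ᵀ z‖²`, and `‖V₂ᵀ z‖ ≤ ‖M V₂‖ ‖x‖ ≤ σ_{r+1} ‖x‖` because
`M V₂` only sees the trailing singular values. Since `‖z‖² = ‖V₁ᵀ z‖² + ‖V₂ᵀ z‖²`, this bounds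
`‖Mᵀ (1 - P)‖ = ‖(1 - P) M‖`.
-/

open Matrix
open scoped Matrix.Norms.L2Operator

def finTail {r m : ℕ} (h : r ≤ m) (j : Fin (m - r)) : Fin m := ⟨r + j, by omega⟩

lemma finTail_injective {r m : ℕ} (h : r ≤ m) : Function.Injective (finTail h) :=
  fun i j hij => Fin.ext (by simpa [finTail] using congrArg Fin.val hij)

lemma Fin.sum_univ_eq_sum_castLE_add_sum_finTail {M : Type*} [AddCommMonoid M] {r m : ℕ}
    (h : r ≤ m) (f : Fin m → M) :
    ∑ j, f j = ∑ i : Fin r, f (Fin.castLE h i) + ∑ j, f (finTail h j) := by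
  rw [← (finCongr (by omega : r + (m - r) = m)).sum_comp, Fin.sum_univ_add]
  rfl

namespace Matrix

section L2OpNorm

variable {ι κ : Type*} [Fintype ι] [Fintype κ]

lemma sum_sq_mulVec_le [DecidableEq κ] (A : Matrix ι κ ℝ) (x : κ → ℝ) :
    ∑ i, (A *ᵥ x) i ^ 2 ≤ ‖A‖ ^ 2 * ∑ j, x j ^ 2 := by
  have h := pow_le_pow_left₀ (norm_nonneg _) (A.l2_opNorm_mulVec (WithLp.toLp 2 x)) 2
  simpa [mul_pow, EuclideanSpace.real_norm_sq_eq] using h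

lemma sq_l2_opNorm_le_of_sum_sq_le [DecidableEq κ] {A : Matrix ι κ ℝ} {K : ℝ} (hK : 0 ≤ K)
    (h : ∀ x, ∑ i, (A *ᵥ x) i ^ 2 ≤ K * ∑ j, x j ^ 2) : ‖A‖ ^ 2 ≤ K := by
  have hA : ‖A‖ ≤ √K := by
    refine ContinuousLinearMap.opNorm_le_bound _ (Real.sqrt_nonneg K) fun x => ?_
    rw [← sq_le_sq₀ (norm_nonneg _) (by positivity), mul_pow, Real.sq_sqrt hK]
    simpa [EuclideanSpace.real_norm_sq_eq] using h x
  calc ‖A‖ ^ 2 ≤ √K ^ 2 := by gcongr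
    _ = K := Real.sq_sqrt hK

lemma l2_opNorm_transpose [DecidableEq ι] [DecidableEq κ] (A : Matrix ι κ ℝ) : ‖Aᵀ‖ = ‖A‖ := by
  rw [← conjTranspose_eq_transpose_of_trivial, l2_opNorm_conjTranspose]

lemma l2_opNorm_le_one_of_transpose_mul_self [DecidableEq κ] {W : Matrix ι κ ℝ}
    (hW : Wᵀ * W = 1) : ‖W‖ ≤ 1 := by
  have h : ‖W‖ * ‖W‖ ≤ 1 := by
    rw [← l2_opNorm_conjTranspose_mul_self, conjTranspose_eq_transpose_of_trivial, hW]
    exact IsStarProjection.norm_le _ (.one _)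
  nlinarith [norm_nonneg W]

lemma dotProduct_mul_transpose_mulVec (A : Matrix ι κ ℝ) (x : ι → ℝ) :
    x ⬝ᵥ ((A * Aᵀ) *ᵥ x) = ∑ j, (Aᵀ *ᵥ x) j ^ 2 := by
  rw [← mulVec_mulVec, dotProduct_mulVec, ← mulVec_transpose]
  simp [dotProduct, sq]

lemma mul_sum_sq_le_of_mulVec_add_mulVec_eq_zero {ν : Type*} [Fintype ν] [DecidableEq ν]
    {A : Matrix ι κ ℝ} {B : Matrix ι ν ℝ} {c : ℝ}
    (hA : ∀ x, c * ∑ j, x j ^ 2 ≤ ∑ i, (A *ᵥ x) i ^ 2) {a : κ → ℝ} {b : ν → ℝ}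
    (hab : A *ᵥ a + B *ᵥ b = 0) :
    c * ∑ j, a j ^ 2 ≤ ‖B‖ ^ 2 * ∑ k, b k ^ 2 :=
  calc c * ∑ j, a j ^ 2 ≤ ∑ i, (A *ᵥ a) i ^ 2 := hA a
    _ = ∑ i, (B *ᵥ b) i ^ 2 := by simp [eq_neg_of_add_eq_zero_left hab]
    _ ≤ ‖B‖ ^ 2 * ∑ k, b k ^ 2 := sum_sq_mulVec_le B b

end L2OpNorm

lemma mul_transpose_eq_add_submatrix_finTail {ι R : Type*} [CommSemiring R] {r m : ℕ}
    (h : r ≤ m) (A B : Matrix ι (Fin m) R) :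
    A * Bᵀ = A.submatrix id (Fin.castLE h) * (B.submatrix id (Fin.castLE h))ᵀ +
      A.submatrix id (finTail h) * (B.submatrix id (finTail h))ᵀ := by
  ext i k
  exact Fin.sum_univ_eq_sum_castLE_add_sum_finTail h _

section ColumnSplit

variable {μ ι₁ ι₂ : Type*} [Fintype μ] [Fintype ι₁] [Fintype ι₂] [DecidableEq μ]
  {V₁ : Matrix μ ι₁ ℝ} {V₂ : Matrix μ ι₂ ℝ}

lemma sum_sq_eq_add_of_mul_transpose_add_eq_one (hV : V₁ * V₁ᵀ + V₂ * V₂ᵀ = 1) (z : μ → ℝ) :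
    ∑ i, z i ^ 2 = ∑ i, (V₁ᵀ *ᵥ z) i ^ 2 + ∑ j, (V₂ᵀ *ᵥ z) j ^ 2 := by
  rw [← dotProduct_mul_transpose_mulVec, ← dotProduct_mul_transpose_mulVec, ← dotProduct_add,
    ← add_mulVec, hV, one_mulVec]
  simp [dotProduct, sq]

lemma sum_sq_le_of_transpose_mulVec_eq_zero [DecidableEq ι₂] {κ : Type*} [Fintype κ] [DecidableEq κ]
    (hV : V₁ * V₁ᵀ + V₂ * V₂ᵀ = 1) {Ω : Matrix μ κ ℝ} {c : ℝ} (hc : 0 < c)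
    (hΩ₁ : ∀ y, c * ∑ i, y i ^ 2 ≤ y ⬝ᵥ ((V₁ᵀ * Ω * (V₁ᵀ * Ω)ᵀ) *ᵥ y))
    {z : μ → ℝ} (hz : Ωᵀ *ᵥ z = 0) :
    ∑ i, z i ^ 2 ≤ (1 + ‖V₂ᵀ * Ω‖ ^ 2 / c) * ∑ j, (V₂ᵀ *ᵥ z) j ^ 2 := by
  have hab : (V₁ᵀ * Ω)ᵀ *ᵥ (V₁ᵀ *ᵥ z) + (V₂ᵀ * Ω)ᵀ *ᵥ (V₂ᵀ *ᵥ z) = 0 := by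
    simp only [transpose_mul, transpose_transpose, mulVec_mulVec, ← add_mulVec, Matrix.mul_assoc,
      ← Matrix.mul_add, hV, Matrix.mul_one, hz]
  have h := mul_sum_sq_le_of_mulVec_add_mulVec_eq_zero
    (fun y => (hΩ₁ y).trans_eq (dotProduct_mul_transpose_mulVec _ y)) hab
  rw [l2_opNorm_transpose, ← le_div_iff₀' hc, ← div_mul_eq_mul_div] at h
  calc ∑ i, z i ^ 2 = ∑ i, (V₁ᵀ *ᵥ z) i ^ 2 + ∑ j, (V₂ᵀ *ᵥ z) j ^ 2 :=
        sum_sq_eq_add_of_mul_transpose_add_eq_one hV z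
    _ ≤ ‖V₂ᵀ * Ω‖ ^ 2 / c * ∑ j, (V₂ᵀ *ᵥ z) j ^ 2 + ∑ j, (V₂ᵀ *ᵥ z) j ^ 2 := by gcongr
    _ = (1 + ‖V₂ᵀ * Ω‖ ^ 2 / c) * ∑ j, (V₂ᵀ *ᵥ z) j ^ 2 := by ring

end ColumnSplit

lemma mul_eq_self_of_range_le {ι κ R : Type*} [Fintype ι] [Fintype κ] [DecidableEq κ]
    [CommSemiring R] {P : Matrix ι ι R} {Y : Matrix ι κ R} (hP : IsIdempotentElem P)
    (h : LinearMap.range Y.mulVecLin ≤ LinearMap.range P.mulVecLin) : P * Y = Y := by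
  refine Matrix.toLin'.injective (LinearMap.ext fun x => ?_)
  obtain ⟨v, hv⟩ := h ⟨x, rfl⟩
  simp only [mulVecLin_apply] at hv
  rw [toLin'_apply, toLin'_apply, ← mulVec_mulVec, ← hv, mulVec_mulVec, hP.eq]

lemma transpose_mul_one_sub_eq_zero {ι κ R : Type*} [Fintype ι] [Fintype κ] [DecidableEq ι]
    [DecidableEq κ] [CommRing R] {P : Matrix ι ι R} {Y : Matrix ι κ R} (hP : IsIdempotentElem P)
    (hPs : P.IsSymm) (h : LinearMap.range Y.mulVecLin ≤ LinearMap.range P.mulVecLin) :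
    Yᵀ * (1 - P) = 0 := by
  rw [Matrix.mul_sub, Matrix.mul_one, ← hPs.eq, ← transpose_mul, mul_eq_self_of_range_le hP h,
    sub_self]

lemma l2_opNorm_sub_mul_eq {ι κ : Type*} [Fintype ι] [Fintype κ] [DecidableEq ι] [DecidableEq κ]
    {P : Matrix ι ι ℝ} (hPs : P.IsSymm) (M : Matrix ι κ ℝ) :
    ‖M - P * M‖ = ‖Mᵀ * (1 - P)‖ := by
  rw [← l2_opNorm_transpose (Mᵀ * _), transpose_mul, transpose_transpose, transpose_sub,
    transpose_one, hPs.eq, Matrix.sub_mul, Matrix.one_mul]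

lemma l2_opNorm_transpose_mul_one_sub_le {ι κ ν : Type*} [Fintype ι] [Fintype κ] [Fintype ν]
    [DecidableEq ι] [DecidableEq ν] {P : Matrix ι ι ℝ} (hP : IsIdempotentElem P) (hPs : P.IsSymm)
    (M : Matrix ι κ ℝ) (X : Matrix κ ν ℝ) :
    ‖Xᵀ * (Mᵀ * (1 - P))‖ ≤ ‖M * X‖ := by
  have hQ : ‖1 - P‖ ≤ 1 := (IsStarProjection.one_sub
    ⟨hP, (conjTranspose_eq_transpose_of_trivial P).trans hPs⟩).norm_le
  calc _ ≤ ‖M * X‖ * ‖1 - P‖ := by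
        rw [← Matrix.mul_assoc, ← transpose_mul, ← l2_opNorm_transpose (M * X)]
        exact l2_opNorm_mul _ _
    _ ≤ ‖M * X‖ := mul_le_of_le_one_right (norm_nonneg _) hQ

def rectDiagonal {α : Type*} [Zero α] (n : ℕ) {m : ℕ} (σ : Fin m → α) :
    Matrix (Fin n) (Fin m) α :=
  of fun i j => if (i : ℕ) = j then σ j else 0

lemma rectDiagonal_submatrix {α : Type*} [Semiring α] {n m k : ℕ} (h : m ≤ n) (σ : Fin m → α)
    (e : Fin k → Fin m) :
    (rectDiagonal n σ).submatrix id e =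
      (1 : Matrix (Fin n) (Fin n) α).submatrix id (Fin.castLE h ∘ e) * diagonal (σ ∘ e) := by
  ext i j
  simp [rectDiagonal, mul_diagonal, one_apply, Fin.ext_iff]

lemma transpose_mul_self_submatrix_one {ι κ α : Type*} [Fintype ι] [DecidableEq ι]
    [DecidableEq κ] [Semiring α] {e : κ → ι} (he : Function.Injective e) :
    ((1 : Matrix ι ι α).submatrix id e)ᵀ * (1 : Matrix ι ι α).submatrix id e = 1 := by
  rw [transpose_submatrix, transpose_one, ← submatrix_mul _ _ _ _ _ Function.bijective_id,
    one_mul, submatrix_one _ he]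

lemma l2_opNorm_svd_mul_submatrix_finTail_le {ι : Type*} [Fintype ι] {n m r : ℕ} (hmn : m ≤ n)
    (hr : r < m) {U : Matrix ι (Fin n) ℝ} {V : Matrix (Fin m) (Fin m) ℝ} {σ : Fin m → ℝ}
    (hU : Uᵀ * U = 1) (hV : Vᵀ * V = 1) (hσpos : ∀ i, 0 ≤ σ i) (hσdesc : Antitone σ) :
    ‖U * rectDiagonal n σ * Vᵀ * V.submatrix id (finTail hr.le)‖ ≤ σ ⟨r, hr⟩ := by
  have hSV : rectDiagonal n σ * Vᵀ * V.submatrix id (finTail hr.le) =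
      (rectDiagonal n σ).submatrix id (finTail hr.le) := by
    change (rectDiagonal n σ * Vᵀ * V).submatrix id _ = _
    rw [Matrix.mul_assoc, hV, Matrix.mul_one]
  have hdiag : ‖diagonal (σ ∘ finTail hr.le)‖ ≤ σ ⟨r, hr⟩ := by
    rw [l2_opNorm_diagonal, pi_norm_le_iff_of_nonneg (hσpos _)]
    intro j
    rw [Function.comp_apply, Real.norm_of_nonneg (hσpos _)]
    exact hσdesc (by simp [finTail, Fin.le_def])
  have hE := l2_opNorm_le_one_of_transpose_mul_self (transpose_mul_self_submatrix_one
    (α := ℝ) ((Fin.castLE_injective hmn).comp (finTail_injective hr.le)))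
  rw [Matrix.mul_assoc U, Matrix.mul_assoc U, hSV, rectDiagonal_submatrix hmn]
  calc _ ≤ ‖U‖ * (‖(1 : Matrix (Fin n) (Fin n) ℝ).submatrix id (Fin.castLE hmn ∘ finTail hr.le)‖ *
        ‖diagonal (σ ∘ finTail hr.le)‖) :=
        (l2_opNorm_mul _ _).trans (by gcongr; exact l2_opNorm_mul _ _)
    _ ≤ 1 * (1 * σ ⟨r, hr⟩) := by
        gcongr
        exact l2_opNorm_le_one_of_transpose_mul_self hU
    _ = σ ⟨r, hr⟩ := by ring

end Matrix

theorem randomized_range_finder_error {n m d r : ℕ} (hd : 0 < d)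
    (hr : r < m) (hmn : m ≤ n)
    (M : Matrix (Fin n) (Fin m) ℝ)
    (U : Matrix (Fin n) (Fin n) ℝ) (V : Matrix (Fin m) (Fin m) ℝ)
    (σ : Fin m → ℝ)
    (hU : Uᵀ * U = 1) (hV : Vᵀ * V = 1)
    (hσpos : ∀ i, 0 ≤ σ i) (hσdesc : Antitone σ)
    (hSVD : M = U * (Matrix.of fun (i : Fin n) (j : Fin m) => if (i : ℕ) = (j : ℕ) then σ j else 0) * Vᵀ)
    (Ω : Matrix (Fin m) (Fin d) ℝ)
    -- V₁ consists of the first r columns of V, V₂ of the remaining ones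
    (V₁ : Matrix (Fin m) (Fin r) ℝ) (hV₁ : V₁ = V.submatrix id (Fin.castLE hr.le))
    (V₂ : Matrix (Fin m) (Fin (m - r)) ℝ)
    (hV₂ : V₂ = V.submatrix id (fun j : Fin (m - r) => (⟨r + (j : ℕ), by omega⟩ : Fin m)))
    (Ω₁ : Matrix (Fin r) (Fin d) ℝ) (hΩ₁ : Ω₁ = V₁ᵀ * Ω)
    (Ω₂ : Matrix (Fin (m - r)) (Fin d) ℝ) (hΩ₂ : Ω₂ = V₂ᵀ * Ω)
    -- λ_min(Ω₁Ω₁ᵀ) ≥ d/(2m), stated via the Rayleigh quotient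
    (hlammin : ∀ x : Fin r → ℝ,
      ((d : ℝ) / (2 * m)) * (∑ i, x i ^ 2) ≤ x ⬝ᵥ ((Ω₁ * Ω₁ᵀ) *ᵥ x))
    (hΩ₂norm : ‖Ω₂‖ ≤ 1)
    -- P is the orthogonal projection onto the column span of Y = MΩ
    (P : Matrix (Fin n) (Fin n) ℝ) (hPsymm : P.IsSymm) (hPidem : P * P = P)
    (hPrange : LinearMap.range P.mulVecLin = LinearMap.range (M * Ω).mulVecLin) :
    ‖M - P * M‖ ^ 2 ≤ σ ⟨r, hr⟩ ^ 2 * (1 + 2 * (m : ℝ) / d) := by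
  subst hΩ₁ hΩ₂
  replace hSVD : M = U * rectDiagonal n σ * Vᵀ := hSVD
  replace hV₂ : V₂ = V.submatrix id (finTail hr.le) := hV₂
  have hm : 0 < m := by omega
  have hsplit : V₁ * V₁ᵀ + V₂ * V₂ᵀ = 1 := by
    rw [hV₁, hV₂, ← mul_transpose_eq_add_submatrix_finTail, mul_eq_one_comm.mp hV]
  have htail : ‖V₂ᵀ * (Mᵀ * (1 - P))‖ ≤ σ ⟨r, hr⟩ := by
    refine (l2_opNorm_transpose_mul_one_sub_le hPidem hPsymm M V₂).trans ?_
    rw [hSVD, hV₂]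
    exact l2_opNorm_svd_mul_submatrix_finTail_le hmn hr hU hV hσpos hσdesc
  rw [l2_opNorm_sub_mul_eq hPsymm]
  refine sq_l2_opNorm_le_of_sum_sq_le (by positivity) fun x => ?_
  have hz : Ωᵀ *ᵥ ((Mᵀ * (1 - P)) *ᵥ x) = 0 := by
    rw [mulVec_mulVec, ← Matrix.mul_assoc, ← transpose_mul,
      transpose_mul_one_sub_eq_zero hPidem hPsymm hPrange.ge, zero_mulVec]
  have hc : (0 : ℝ) < d / (2 * m) := by positivity
  calc ∑ i, ((Mᵀ * (1 - P)) *ᵥ x) i ^ 2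
      ≤ (1 + ‖V₂ᵀ * Ω‖ ^ 2 / (d / (2 * m))) * ∑ j, (V₂ᵀ *ᵥ ((Mᵀ * (1 - P)) *ᵥ x)) j ^ 2 :=
        (sum_sq_le_of_transpose_mulVec_eq_zero hsplit hc hlammin hz :)
    _ ≤ (1 + 1 / (d / (2 * m))) * (σ ⟨r, hr⟩ ^ 2 * ∑ i, x i ^ 2) := by
        rw [mulVec_mulVec]
        gcongr
        · exact pow_le_one₀ (norm_nonneg _) hΩ₂norm
        · exact (sum_sq_mulVec_le _ x).trans (by gcongr)
    _ = σ ⟨r, hr⟩ ^ 2 * (1 + 2 * m / d) * ∑ i, x i ^ 2 := by rw [one_div_div]; ring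
end

section
/- Let σ₁ ≥ … ≥ σ_m ≥ 0 and λ > 0, and define the numerical rank r(M,λ) = Σ_{i=1}^m σ_i²/(σ_i² + mnλ). If σ_r²/((σ_r² + mnλ) · r(M,λ)) ≥ a/r for some a > 0, then μ(λ) ≥ a·μ(r), where μ(r) and μ(λ) are the incoherence measures defined via the top-r singular subspaces and via Σ S^{−1/2} with S = Σ² + mnλ I, respectively. -/
open Matrix

variable (n m : ℕ)

/-- Numerical rank `r(M, λ) = ∑ᵢ σᵢ² / (σᵢ² + mnλ)`. -/
noncomputable def numRank (σ : Fin m → ℝ) (lam : ℝ) : ℝ :=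
  ∑ i, σ i ^ 2 / (σ i ^ 2 + m * n * lam)

/-- Generalized incoherence measure `μ(λ)` defined via `Σ S^{-1/2}`
with `S = Σ² + mnλ I`. -/
noncomputable def muLam (U : Matrix (Fin n) (Fin m) ℝ)
    (V : Matrix (Fin m) (Fin m) ℝ) (σ : Fin m → ℝ) (lam : ℝ) : ℝ :=
  max
    (⨆ i : Fin n, ((n : ℝ) / numRank n m σ lam) *
      ∑ j, (U i j * σ j / Real.sqrt (σ j ^ 2 + m * n * lam)) ^ 2)
    (⨆ i : Fin m, ((m : ℝ) / numRank n m σ lam) *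
      ∑ j, (V i j * σ j / Real.sqrt (σ j ^ 2 + m * n * lam)) ^ 2)

/-- Standard incoherence measure `μ(r)` of the top-`r` singular subspaces. -/
noncomputable def muR (U : Matrix (Fin n) (Fin m) ℝ)
    (V : Matrix (Fin m) (Fin m) ℝ) (r : ℕ) (hr : r ≤ m) : ℝ :=
  max
    (⨆ i : Fin n, ((n : ℝ) / r) * ∑ j : Fin r, (U i (Fin.castLE hr j)) ^ 2)
    (⨆ i : Fin m, ((m : ℝ) / r) * ∑ j : Fin r, (V i (Fin.castLE hr j)) ^ 2)

/-! With `s j = σ j ^ 2 / (σ j ^ 2 + mnλ)`, the squared norm of row `i` of `U Σ S^{-1/2}` is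
`∑ j, U i j ^ 2 * s j`. Since `σ` is decreasing and nonnegative, so is `s`, hence on the top `r`
coordinates `s j ≥ s (r - 1)` and `s (r - 1) * ‖row_i(U₁)‖² ≤ ‖row_i(U Σ S^{-1/2})‖²`; the hypothesis
`s (r - 1) / r(M, λ) ≥ a / r` then trades the normalisation `n / r` for `n / r(M, λ)`. Same for `V`. -/

lemma sq_div_sq_add_le_of_le {c x y : ℝ} (hc : 0 ≤ c) (hx : 0 ≤ x) (hxy : x ≤ y) :
    x ^ 2 / (x ^ 2 + c) ≤ y ^ 2 / (y ^ 2 + c) := by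
  rcases hx.eq_or_lt with rfl | hx
  · rw [sq, zero_mul, zero_div]
    positivity
  have hy := hx.trans_le hxy
  rw [div_le_div_iff₀ (by positivity) (by positivity)]
  nlinarith [mul_le_mul hxy hxy hx.le hy.le]

lemma sq_mul_div_sqrt_sq_add {c : ℝ} (hc : 0 ≤ c) (w x : ℝ) :
    (w * x / Real.sqrt (x ^ 2 + c)) ^ 2 = w ^ 2 * (x ^ 2 / (x ^ 2 + c)) := by
  rw [div_pow, Real.sq_sqrt (by positivity), mul_pow, mul_div_assoc]

lemma mul_sum_castLE_sq_le_sum_sq_mul {r m : ℕ} (hr : r ≤ m) {t : ℝ} (s w : Fin m → ℝ)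
    (hs : ∀ j, 0 ≤ s j) (ht : ∀ j : Fin r, t ≤ s (Fin.castLE hr j)) :
    t * ∑ j : Fin r, w (Fin.castLE hr j) ^ 2 ≤ ∑ j, w j ^ 2 * s j := by
  let e : Fin r ↪ Fin m := ⟨Fin.castLE hr, Fin.castLE_injective hr⟩
  calc t * ∑ j : Fin r, w (Fin.castLE hr j) ^ 2
      ≤ ∑ j : Fin r, w (e j) ^ 2 * s (e j) := by
        rw [Finset.mul_sum]
        refine Finset.sum_le_sum fun j _ => ?_
        rw [mul_comm]
        exact mul_le_mul_of_nonneg_left (ht j) (sq_nonneg _)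
    _ = ∑ j ∈ Finset.univ.map e, w j ^ 2 * s j :=
        (Finset.sum_map Finset.univ e fun j => w j ^ 2 * s j).symm
    _ ≤ ∑ j, w j ^ 2 * s j :=
        Finset.sum_le_univ_sum_of_nonneg fun j => mul_nonneg (sq_nonneg _) (hs j)

lemma mul_div_mul_sum_castLE_sq_le {r m : ℕ} (hr : r ≤ m) {a t R k : ℝ} (hR : 0 ≤ R)
    (hk : 0 ≤ k) (hat : a / r ≤ t / R) (s w : Fin m → ℝ) (hs : ∀ j, 0 ≤ s j)
    (ht : ∀ j : Fin r, t ≤ s (Fin.castLE hr j)) :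
    a * ((k / r) * ∑ j : Fin r, w (Fin.castLE hr j) ^ 2) ≤ (k / R) * ∑ j, w j ^ 2 * s j :=
  calc a * ((k / r) * ∑ j : Fin r, w (Fin.castLE hr j) ^ 2)
      = a / r * (k * ∑ j : Fin r, w (Fin.castLE hr j) ^ 2) := by ring
    _ ≤ t / R * (k * ∑ j : Fin r, w (Fin.castLE hr j) ^ 2) := by gcongr
    _ = (k / R) * (t * ∑ j : Fin r, w (Fin.castLE hr j) ^ 2) := by ring
    _ ≤ (k / R) * ∑ j, w j ^ 2 * s j := by
      gcongr
      exact mul_sum_castLE_sq_le_sum_sq_mul hr s w hs ht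

lemma mul_iSup_le_iSup_of_le {ι : Type*} [Finite ι] {a : ℝ} (ha : 0 ≤ a) {f g : ι → ℝ}
    (h : ∀ i, a * g i ≤ f i) : a * ⨆ i, g i ≤ ⨆ i, f i := by
  rw [Real.mul_iSup_of_nonneg ha]
  exact ciSup_mono (Finite.bddAbove_range f) h

theorem muLam_lower_bounds_muR {n m r : ℕ}
    (hr0 : 0 < r) (hr : r ≤ m)
    (U : Matrix (Fin n) (Fin m) ℝ) (V : Matrix (Fin m) (Fin m) ℝ)
    (σ : Fin m → ℝ) (hσpos : ∀ i, 0 ≤ σ i) (hσdesc : Antitone σ)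
    (lam : ℝ) (hlam : 0 < lam) (a : ℝ) (ha : 0 < a)
    (hkey : σ ⟨r - 1, by omega⟩ ^ 2 /
        ((σ ⟨r - 1, by omega⟩ ^ 2 + m * n * lam) * numRank n m σ lam) ≥ a / r) :
    muLam n m U V σ lam ≥ a * muR n m U V r hr := by
  set c : ℝ := m * n * lam
  set s : Fin m → ℝ := fun j => σ j ^ 2 / (σ j ^ 2 + c)
  set R := numRank n m σ lam
  have hc : 0 ≤ c := by positivity
  have hR : 0 ≤ R := Finset.sum_nonneg fun j _ => by positivity
  have hs : ∀ j, 0 ≤ s j := fun j => by positivity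
  have hat : a / r ≤ s ⟨r - 1, by omega⟩ / R := by rwa [div_div]
  have ht : ∀ j : Fin r, s ⟨r - 1, by omega⟩ ≤ s (Fin.castLE hr j) := fun j =>
    sq_div_sq_add_le_of_le hc (hσpos _) (hσdesc (Fin.mk_le_mk.2 (by omega)))
  have hrow : ∀ k : ℝ, 0 ≤ k → ∀ w : Fin m → ℝ,
      a * ((k / r) * ∑ j : Fin r, w (Fin.castLE hr j) ^ 2)
        ≤ (k / R) * ∑ j, (w j * σ j / Real.sqrt (σ j ^ 2 + c)) ^ 2 := by
    intro k hk w
    simp_rw [sq_mul_div_sqrt_sq_add hc]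
    exact mul_div_mul_sum_castLE_sq_le hr hR hk hat s w hs ht
  rw [ge_iff_le, muR, muLam, mul_max_of_nonneg _ _ ha.le]
  exact max_le_max (mul_iSup_le_iSup_of_le ha.le fun i => hrow n (by positivity) (U i))
    (mul_iSup_le_iSup_of_le ha.le fun i => hrow m (by positivity) (V i))
end
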